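/- A thin spider G with partition (R, C, S), where C = {c₁,...,c_k}, S = {s₁,...,s_k} (k ≥ 2) and s_i is adjacent to c_j iff i = j, is well covered if and only if R = ∅. -/

import Mathlib

variable {V : Type*}

/-- `C` is a vertex cover of `G`: every edge has an endpoint in `C`. -/
def IsVertexCover (G : SimpleGraph V) (C : Set V) : Prop :=
  ∀ ⦃u v : V⦄, G.Adj u v → u ∈ C ∨ v ∈ C

/-- A minimal vertex cover: no proper subset is a vertex cover. -/
def IsMinimalVertexCover (G : SimpleGraph V) (C : Set V) : Prop :=
  IsVertexCover G C ∧ ∀ D : Set V, D ⊂ C → ¬ IsVertexCover G D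

/-- `vc(G)`: minimum size of a vertex cover. -/
noncomputable def vcNum (G : SimpleGraph V) : ℕ :=
  sInf {n | ∃ C : Set V, IsVertexCover G C ∧ C.ncard = n}

/-- `vc⁺(G)`: maximum size of a minimal vertex cover. -/
noncomputable def vcPlus (G : SimpleGraph V) : ℕ :=
  sSup {n | ∃ C : Set V, IsMinimalVertexCover G C ∧ C.ncard = n}

/-- `I` is an independent set of `G`. -/
def IsIndepSet (G : SimpleGraph V) (I : Set V) : Prop :=
  ∀ ⦃u v : V⦄, u ∈ I → v ∈ I → ¬ G.Adj u v

/-- A maximal independent set of `G`. -/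
def IsMaxIndepSet (G : SimpleGraph V) (I : Set V) : Prop :=
  IsIndepSet G I ∧ ∀ J : Set V, IsIndepSet G J → I ⊆ J → J = I

/-- `G` is well covered: all maximal independent sets have the same size. -/
def WellCovered (G : SimpleGraph V) : Prop :=
  ∀ I J : Set V, IsMaxIndepSet G I → IsMaxIndepSet G J → I.ncard = J.ncard

/-- An independent set of the subgraph of `G` induced on `W`. -/
def IsIndepOn (G : SimpleGraph V) (W I : Set V) : Prop :=
  I ⊆ W ∧ IsIndepSet G I

/-- A maximal independent set of the subgraph of `G` induced on `W`. -/
def IsMaxIndepOn (G : SimpleGraph V) (W I : Set V) : Prop :=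
  IsIndepOn G W I ∧ ∀ J : Set V, IsIndepOn G W J → I ⊆ J → J = I

/-- The subgraph of `G` induced on `W` is well covered. -/
def WellCoveredOn (G : SimpleGraph V) (W : Set V) : Prop :=
  ∀ I J : Set V, IsMaxIndepOn G W I → IsMaxIndepOn G W J → I.ncard = J.ncard

/-- Independence number of the subgraph induced on `W`. -/
noncomputable def indepNumOn (G : SimpleGraph V) (W : Set V) : ℕ :=
  sSup {n | ∃ I : Set V, IsIndepOn G W I ∧ I.ncard = n}

/-- Independence number `α(G)`. -/
noncomputable def indepNum (G : SimpleGraph V) : ℕ :=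
  sSup {n | ∃ I : Set V, IsIndepSet G I ∧ I.ncard = n}

/-- Open neighborhood of a set `B`. -/
def nbhdSet (G : SimpleGraph V) (B : Set V) : Set V :=
  {v | ∃ b ∈ B, G.Adj b v}

/-- Crown decomposition of the subgraph of `G` induced on `W` into crown `C`,
head `H` and remainder `R`. -/
def IsCrownDecompOn (G : SimpleGraph V) (W C H R : Set V) : Prop :=
  C.Nonempty ∧ IsIndepSet G C ∧
  (∀ ⦃u v : V⦄, u ∈ C → v ∈ R → ¬ G.Adj u v) ∧
  C ∪ H ∪ R = W ∧ Disjoint C H ∧ Disjoint C R ∧ Disjoint H R ∧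
  ∃ M : V → V, (∀ h ∈ H, M h ∈ C ∧ G.Adj h (M h)) ∧ Set.InjOn M H

/-- Crown decomposition of `G`. -/
def IsCrownDecomp (G : SimpleGraph V) (C H R : Set V) : Prop :=
  IsCrownDecompOn G Set.univ C H R

/-- `G` has no isolated vertices. -/
def NoIsolated (G : SimpleGraph V) : Prop := ∀ v : V, ∃ u, G.Adj v u

/-- Pseudo-split graph with partition `(R, C, S)`. -/
def IsPseudoSplit (G : SimpleGraph V) (R C S : Set V) : Prop :=
  R ∪ C ∪ S = Set.univ ∧ Disjoint R C ∧ Disjoint R S ∧ Disjoint C S ∧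
  (∀ ⦃u v : V⦄, u ∈ C → v ∈ C → u ≠ v → G.Adj u v) ∧
  IsIndepSet G S ∧
  (∀ r ∈ R, ∀ c ∈ C, G.Adj r c) ∧
  (∀ r ∈ R, ∀ s ∈ S, ¬ G.Adj r s) ∧
  (∀ c ∈ C, ∃ s ∈ S, G.Adj c s) ∧
  (∀ s ∈ S, ∃ c ∈ C, ¬ G.Adj s c)

/-- Join of two graphs: disjoint union plus all edges between the two sides. -/
def joinGraph {α β : Type*} (G₁ : SimpleGraph α) (G₂ : SimpleGraph β) :
    SimpleGraph (α ⊕ β) where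
  Adj x y := match x, y with
    | Sum.inl a, Sum.inl b => G₁.Adj a b
    | Sum.inr a, Sum.inr b => G₂.Adj a b
    | Sum.inl _, Sum.inr _ => True
    | Sum.inr _, Sum.inl _ => True
  symm := by constructor; rintro (a|a) (b|b) h <;> first | exact h.symm | trivial
  loopless := by constructor; rintro (a|a) h <;> exact h.ne rfl

/-!
With `R = ∅`, a maximal independent set either meets the clique `C` in some `cⱼ`, and is
then `{cⱼ} ∪ S \ {sⱼ}`, or avoids `C` and is then `S`; both have size `k`. If `r ∈ R`, the
independent set `S ∪ {r}` extends to a maximal one of size `> k`, while `{c₁} ∪ S \ {s₁}` is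
maximal of size `k`.
-/

section IndepSet

variable {G : SimpleGraph V} {I : Set V}

theorem IsIndepSet.mono {J : Set V} (hI : IsIndepSet G I) (hJI : J ⊆ I) : IsIndepSet G J :=
  fun _ _ hu hv => hI (hJI hu) (hJI hv)

theorem IsIndepSet.insert (hI : IsIndepSet G I) {u : V} (hu : ∀ v ∈ I, ¬ G.Adj u v) :
    IsIndepSet G (insert u I) := by
  rintro v w (rfl | hv) (rfl | hw)
  · exact fun h => h.ne rfl
  · exact hu w hw
  · exact fun h => hu v hv h.symm
  · exact hI hv hw

theorem isMaxIndepSet_iff_maximal : IsMaxIndepSet G I ↔ Maximal (IsIndepSet G) I :=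
  and_congr_right fun _ => forall_congr' fun _ => forall_congr' fun _ =>
    ⟨fun h hIJ => (h hIJ).le, fun h hIJ => (h hIJ).antisymm hIJ⟩

theorem IsIndepSet.exists_isMaxIndepSet_superset [Finite V] (hI : IsIndepSet G I) :
    ∃ J, I ⊆ J ∧ IsMaxIndepSet G J := by
  obtain ⟨J, hIJ, hJ⟩ := Finite.exists_le_maximal hI
  exact ⟨J, hIJ, isMaxIndepSet_iff_maximal.2 hJ⟩

end IndepSet

namespace IsPseudoSplit

variable {G : SimpleGraph V} {R C S : Set V}

theorem mem_or_mem_or_mem (h : IsPseudoSplit G R C S) (v : V) : v ∈ R ∨ v ∈ C ∨ v ∈ S := by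
  have hv : v ∈ R ∪ C ∪ S := h.1 ▸ Set.mem_univ v
  rcases hv with (hv | hv) | hv <;> simp [hv]

theorem adj_of_mem_C (h : IsPseudoSplit G R C S) {u v : V} (hu : u ∈ C) (hv : v ∈ C)
    (huv : u ≠ v) : G.Adj u v :=
  h.2.2.2.2.1 hu hv huv

theorem isIndepSet_S (h : IsPseudoSplit G R C S) : IsIndepSet G S := h.2.2.2.2.2.1

theorem adj_of_mem_R_of_mem_C (h : IsPseudoSplit G R C S) {r c : V} (hr : r ∈ R) (hc : c ∈ C) :
    G.Adj r c :=
  h.2.2.2.2.2.2.1 r hr c hc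

theorem not_adj_of_mem_R_of_mem_S (h : IsPseudoSplit G R C S) {r s : V} (hr : r ∈ R)
    (hs : s ∈ S) : ¬ G.Adj r s :=
  h.2.2.2.2.2.2.2.1 r hr s hs

theorem disjoint_R_S (h : IsPseudoSplit G R C S) : Disjoint R S := h.2.2.1

theorem disjoint_C_S (h : IsPseudoSplit G R C S) : Disjoint C S := h.2.2.2.1

end IsPseudoSplit

section ThinSpider

variable {G : SimpleGraph V} {R : Set V} {k : ℕ} {cf sf : Fin k → V}

def legSwap (cf sf : Fin k → V) (j : Fin k) : Set V :=
  insert (cf j) (Set.range sf \ {sf j})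

theorem injective_of_adj_iff_left (hadj : ∀ i j, G.Adj (sf i) (cf j) ↔ i = j) :
    Function.Injective cf := fun i j hij =>
  (hadj i j).1 (hij ▸ (hadj i i).2 rfl)

theorem injective_of_adj_iff_right (hadj : ∀ i j, G.Adj (sf i) (cf j) ↔ i = j) :
    Function.Injective sf := fun i j hij =>
  ((hadj j i).1 (hij ▸ (hadj i i).2 rfl)).symm

theorem ncard_range_fin {f : Fin k → V} (hf : Function.Injective f) :
    (Set.range f).ncard = k := by
  rw [Set.ncard_range_of_injective hf, Nat.card_eq_fintype_card, Fintype.card_fin]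

theorem ncard_legSwap (hCS : Disjoint (Set.range cf) (Set.range sf))
    (hsf : Function.Injective sf) (j : Fin k) : (legSwap cf sf j).ncard = k := by
  have hj : cf j ∉ Set.range sf \ {sf j} := fun h =>
    Set.disjoint_left.1 hCS ⟨j, rfl⟩ h.1
  rw [legSwap, Set.ncard_insert_of_notMem hj,
    Set.ncard_sdiff_singleton_of_mem (Set.mem_range_self j), ncard_range_fin hsf]
  have := j.pos
  omega

theorem isIndepSet_legSwap (hS : IsIndepSet G (Set.range sf))
    (hadj : ∀ i j, G.Adj (sf i) (cf j) ↔ i = j) (j : Fin k) :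
    IsIndepSet G (legSwap cf sf j) := by
  refine (hS.mono Set.sdiff_subset).insert ?_
  rintro _ ⟨⟨l, rfl⟩, hl⟩ hadj'
  exact hl (congrArg sf ((hadj l j).1 hadj'.symm))

theorem subset_legSwap (hps : IsPseudoSplit G R (Set.range cf) (Set.range sf))
    (hadj : ∀ i j, G.Adj (sf i) (cf j) ↔ i = j) {I : Set V} (hI : IsIndepSet G I) {j : Fin k}
    (hj : cf j ∈ I) : I ⊆ legSwap cf sf j := by
  intro v hv
  have hvj : ¬ G.Adj v (cf j) := hI hv hj
  rcases hps.mem_or_mem_or_mem v with hvR | ⟨l, rfl⟩ | ⟨l, rfl⟩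
  · exact absurd (hps.adj_of_mem_R_of_mem_C hvR ⟨j, rfl⟩) hvj
  · obtain rfl | hlj := eq_or_ne l j
    · exact Set.mem_insert _ _
    · exact absurd (hps.adj_of_mem_C ⟨l, rfl⟩ ⟨j, rfl⟩
        ((injective_of_adj_iff_left hadj).ne hlj)) hvj
  · obtain rfl | hlj := eq_or_ne l j
    · exact absurd ((hadj l l).2 rfl) hvj
    · exact Or.inr ⟨⟨l, rfl⟩, (injective_of_adj_iff_right hadj).ne hlj⟩

variable (hps : IsPseudoSplit G R (Set.range cf) (Set.range sf))
  (hadj : ∀ i j, G.Adj (sf i) (cf j) ↔ i = j)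
include hps hadj

theorem isMaxIndepSet_legSwap (j : Fin k) : IsMaxIndepSet G (legSwap cf sf j) :=
  ⟨isIndepSet_legSwap hps.isIndepSet_S hadj j, fun _ hJ hsub =>
    (subset_legSwap hps hadj hJ (hsub (Set.mem_insert _ _))).antisymm hsub⟩

theorem ncard_eq_of_isMaxIndepSet (hR : R = ∅) {I : Set V} (hI : IsMaxIndepSet G I) :
    I.ncard = k := by
  by_cases hC : ∃ j, cf j ∈ I
  · obtain ⟨j, hj⟩ := hC
    rw [← hI.2 _ (isIndepSet_legSwap hps.isIndepSet_S hadj j) (subset_legSwap hps hadj hI.1 hj)]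
    exact ncard_legSwap hps.disjoint_C_S (injective_of_adj_iff_right hadj) j
  · have hIS : I ⊆ Set.range sf := by
      intro v hv
      rcases hps.mem_or_mem_or_mem v with hvR | ⟨j, rfl⟩ | hvS
      · exact absurd (hR ▸ hvR) (Set.notMem_empty v)
      · exact absurd ⟨j, hv⟩ hC
      · exact hvS
    rw [← hI.2 _ hps.isIndepSet_S hIS]
    exact ncard_range_fin (injective_of_adj_iff_right hadj)

theorem wellCovered_of_eq_empty (hR : R = ∅) : WellCovered G := fun _ _ hI hJ => by
  rw [ncard_eq_of_isMaxIndepSet hps hadj hR hI, ncard_eq_of_isMaxIndepSet hps hadj hR hJ]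

theorem not_wellCovered_of_nonempty [Finite V] (hk : 0 < k) (hR : R.Nonempty) :
    ¬ WellCovered G := by
  obtain ⟨r, hr⟩ := hR
  have hrS : r ∉ Set.range sf := Set.disjoint_left.1 hps.disjoint_R_S hr
  have hindep : IsIndepSet G (insert r (Set.range sf)) :=
    hps.isIndepSet_S.insert fun _ hs => hps.not_adj_of_mem_R_of_mem_S hr hs
  obtain ⟨J, hrSJ, hJ⟩ := hindep.exists_isMaxIndepSet_superset
  have hJcard : k + 1 ≤ J.ncard := by
    calc k + 1 = (insert r (Set.range sf)).ncard := by
          rw [Set.ncard_insert_of_notMem hrS, ncard_range_fin (injective_of_adj_iff_right hadj)]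
      _ ≤ J.ncard := Set.ncard_le_ncard hrSJ
  intro hwc
  have hsame := hwc _ _ (isMaxIndepSet_legSwap hps hadj ⟨0, hk⟩) hJ
  rw [ncard_legSwap hps.disjoint_C_S (injective_of_adj_iff_right hadj)] at hsame
  omega

end ThinSpider

theorem stmt16_general [Fintype V] (G : SimpleGraph V) (R : Set V) (k : ℕ) (hk : 2 ≤ k)
    (cf sf : Fin k → V)
    (hps : IsPseudoSplit G R (Set.range cf) (Set.range sf))
    (hadj : ∀ i j, G.Adj (sf i) (cf j) ↔ i = j) :
    WellCovered G ↔ R = ∅ := by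
  refine ⟨fun hwc => ?_, wellCovered_of_eq_empty hps hadj⟩
  exact Set.not_nonempty_iff_eq_empty.1 fun hR =>
    not_wellCovered_of_nonempty hps hadj (by omega) hR hwc

theorem stmt16 [Fintype V] (G : SimpleGraph V) (R : Set V) (k : ℕ) (hk : 2 ≤ k)
    (cf sf : Fin k → V)
    (hcf : Function.Injective cf) (hsf : Function.Injective sf)
    (hps : IsPseudoSplit G R (Set.range cf) (Set.range sf))
    (hadj : ∀ i j, G.Adj (sf i) (cf j) ↔ i = j) :
    WellCovered G ↔ R = ∅ :=
  stmt16_general G R k hk cf sf hps hadj
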